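/- arXiv:2209.13271 — 7 statements merged into one kernel-verified Lean document; each statement's English description precedes it below -/
import Mathlib

section
/- Master identity (Theorem 3.1): Under the stated setting, the derivative at θ of the parametrized iterate and minimizer satisfy deriv xₜ θ - deriv x⋆ θ = ((Polynomial.aeval (H θ) P) - (Polynomial.aeval (H θ) P.derivative) * (H θ)).mulVec (deriv x₀ θ - deriv x⋆ θ) + (Polynomial.aeval (H θ) P.derivative).mulVec ((deriv H θ).mulVec (x₀ θ) + (H θ).mulVec (deriv x₀ θ) + deriv b θ). -/
/-!
Write `x⋆ = -H⁻¹ b`, `A = P(H)` and `A' = P'(H)` at `θ`. Differentiating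
`xₜ = x⋆ + A (x₀ - x⋆)` gives `xₜ' - x⋆' = A (x₀' - x⋆') + A' H' (x₀ - x⋆)`, where
`(P(H))' = P'(H) H'` because `H` commutes with `H'`. Differentiating the stationarity
condition `H x⋆ + b = 0` gives `H' x⋆ = -(H x⋆' + b')`, and substituting this into
`A' H' (x₀ - x⋆)` yields the identity.
-/

open Polynomial Matrix Filter Topology

attribute [local instance] Matrix.normedAddCommGroup Matrix.normedSpace

section MatrixCalculus

variable {𝕜 : Type*} [NontriviallyNormedField 𝕜] {l m n : Type*} {x : 𝕜}

theorem hasDerivAt_matrix [Fintype n] {f : 𝕜 → Matrix m n 𝕜} {f' : Matrix m n 𝕜} :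
    HasDerivAt f f' x ↔ ∀ i j, HasDerivAt (fun t => f t i j) (f' i j) x :=
  hasDerivAt_pi.trans (forall_congr' fun _ => hasDerivAt_pi)

theorem HasDerivAt.matrix_mul [Fintype m] [Fintype n] {f : 𝕜 → Matrix l m 𝕜}
    {g : 𝕜 → Matrix m n 𝕜} {f' : Matrix l m 𝕜} {g' : Matrix m n 𝕜}
    (hf : HasDerivAt f f' x) (hg : HasDerivAt g g' x) :
    HasDerivAt (fun t => f t * g t) (f' * g x + f x * g') x := by
  rw [hasDerivAt_matrix] at hf hg ⊢
  intro i j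
  simp only [mul_apply, Matrix.add_apply, ← Finset.sum_add_distrib]
  exact .fun_sum fun k _ => (hf i k).mul (hg k j)

theorem HasDerivAt.matrix_mulVec [Fintype n] {f : 𝕜 → Matrix m n 𝕜} {v : 𝕜 → n → 𝕜}
    {f' : Matrix m n 𝕜} {v' : n → 𝕜} (hf : HasDerivAt f f' x) (hv : HasDerivAt v v' x) :
    HasDerivAt (fun t => f t *ᵥ v t) (f' *ᵥ v x + f x *ᵥ v') x := by
  rw [hasDerivAt_matrix] at hf
  rw [hasDerivAt_pi] at hv ⊢
  intro i
  simp only [mulVec, dotProduct, Pi.add_apply, ← Finset.sum_add_distrib]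
  exact .fun_sum fun k _ => (hf i k).mul (hv k)

theorem HasDerivAt.mulVec_add_eq_zero_of_eventually [Fintype m] [Fintype n]
    {H : 𝕜 → Matrix m n 𝕜} {v : 𝕜 → n → 𝕜} {b : 𝕜 → m → 𝕜} {H' : Matrix m n 𝕜} {v' : n → 𝕜}
    {b' : m → 𝕜} (hH : HasDerivAt H H' x) (hv : HasDerivAt v v' x) (hb : HasDerivAt b b' x)
    (h : ∀ᶠ t in 𝓝 x, H t *ᵥ v t + b t = 0) :
    H' *ᵥ v x + H x *ᵥ v' + b' = 0 :=
  ((hH.matrix_mulVec hv).add hb).unique ((hasDerivAt_const x (0 : m → 𝕜)).congr_of_eventuallyEq h)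

theorem HasDerivAt.matrix_aeval [Fintype n] [DecidableEq n] {H : 𝕜 → Matrix n n 𝕜}
    {H' : Matrix n n 𝕜} (hH : HasDerivAt H H' x) (hcomm : Commute (H x) H') (p : 𝕜[X]) :
    HasDerivAt (fun t => aeval (H t) p) (aeval (H x) (derivative p) * H') x := by
  induction p using Polynomial.recOnHorner with
  | M0 =>
    simp only [map_zero, zero_mul]
    exact hasDerivAt_const x 0
  | MC p a _ _ ih =>
    simp only [map_add, aeval_C, derivative_C, add_zero]
    exact ih.add_const _
  | MX p _ ih =>
    simp only [map_mul, aeval_X, derivative_mul, derivative_X, mul_one, map_add]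
    convert ih.matrix_mul hH using 1
    rw [add_mul, mul_assoc, hcomm.eq, ← mul_assoc]

/- With the `L∞` operator norm, `Matrix n n 𝕜` is a complete normed algebra, so differentiability of
`Ring.inverse` applies; that norm induces the usual topology, which is all `DifferentiableAt`
depends on. -/
theorem DifferentiableAt.matrix_inv [CompleteSpace 𝕜] [Fintype n] [DecidableEq n] {E : Type*}
    [NormedAddCommGroup E] [NormedSpace 𝕜 E] {H : E → Matrix n n 𝕜} {z : E}
    (hH : DifferentiableAt 𝕜 H z) (hunit : IsUnit (H z)) :
    DifferentiableAt 𝕜 (fun t => (H t)⁻¹) z := by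
  let : NormedRing (Matrix n n 𝕜) := Matrix.linftyOpNormedRing
  let : NormedAlgebra 𝕜 (Matrix n n 𝕜) := Matrix.linftyOpNormedAlgebra
  have : HasSummableGeomSeries (Matrix n n 𝕜) :=
    @instHasSummableGeomSeriesOfCompleteSpace _ _ (FiniteDimensional.complete 𝕜 _)
  simp only [nonsing_inv_eq_ringInverse]
  exact hH.inverse hunit

theorem ContinuousAt.eventually_mulVec_neg_inv_mulVec_add_eq_zero [Fintype n] [DecidableEq n]
    {E : Type*} [TopologicalSpace E] {H : E → Matrix n n 𝕜} {z : E} (hH : ContinuousAt H z)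
    (hunit : IsUnit (H z)) (b : E → n → 𝕜) :
    ∀ᶠ t in 𝓝 z, H t *ᵥ -((H t)⁻¹ *ᵥ b t) + b t = 0 := by
  have hdet : (H z).det ≠ 0 := ((isUnit_iff_isUnit_det _).1 hunit).ne_zero
  filter_upwards [(continuous_id.matrix_det.continuousAt.comp hH).eventually_ne hdet] with t ht
  rw [mulVec_neg, mulVec_mulVec, mul_nonsing_inv (H t) (isUnit_iff_ne_zero.2 ht), one_mulVec,
    neg_add_cancel]

end MatrixCalculus

theorem master_identity_general {d : ℕ} (θ : ℝ)
    (H : ℝ → Matrix (Fin d) (Fin d) ℝ) (b x₀ : ℝ → (Fin d → ℝ))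
    (hH : DifferentiableAt ℝ H θ) (hb : DifferentiableAt ℝ b θ)
    (hx₀ : DifferentiableAt ℝ x₀ θ)
    (hpd : (H θ).PosDef)
    (hcomm : H θ * deriv H θ = deriv H θ * H θ)
    (P : Polynomial ℝ)
    (xstar : ℝ → (Fin d → ℝ))
    (hxstar : ∀ θ' : ℝ, xstar θ' = -((H θ')⁻¹.mulVec (b θ')))
    (xt : ℝ → (Fin d → ℝ))
    (hxt : ∀ θ' : ℝ, xt θ' =
      xstar θ' + ((Polynomial.aeval (H θ')) P).mulVec (x₀ θ' - xstar θ')) :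
    deriv xt θ - deriv xstar θ =
      ((Polynomial.aeval (H θ)) P - (Polynomial.aeval (H θ)) P.derivative * H θ).mulVec
          (deriv x₀ θ - deriv xstar θ)
        + ((Polynomial.aeval (H θ)) P.derivative).mulVec
            ((deriv H θ).mulVec (x₀ θ) + (H θ).mulVec (deriv x₀ θ) + deriv b θ) := by
  have hxs : HasDerivAt xstar (deriv xstar θ) θ := by
    rw [funext hxstar]
    exact ((hH.matrix_inv hpd.isUnit).hasDerivAt.matrix_mulVec hb.hasDerivAt).neg.differentiableAt
      |>.hasDerivAt
  have hstat : deriv H θ *ᵥ xstar θ + H θ *ᵥ deriv xstar θ + deriv b θ = 0 :=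
    hH.hasDerivAt.mulVec_add_eq_zero_of_eventually hxs hb.hasDerivAt <|
    (hH.continuousAt.eventually_mulVec_neg_inv_mulVec_add_eq_zero hpd.isUnit b).mono
      fun t ht => by rwa [hxstar]
  have hxt' : HasDerivAt xt (deriv xstar θ + ((aeval (H θ) (derivative P) * deriv H θ) *ᵥ
      (x₀ θ - xstar θ) + aeval (H θ) P *ᵥ (deriv x₀ θ - deriv xstar θ))) θ := by
    rw [funext hxt]
    exact hxs.add ((hH.hasDerivAt.matrix_aeval hcomm P).matrix_mulVec (hx₀.hasDerivAt.sub hxs))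
  rw [hxt'.deriv]
  have hstatA := congrArg (aeval (H θ) (derivative P) *ᵥ ·) hstat
  simp only [mulVec_add, mulVec_zero] at hstatA
  simp only [sub_mulVec, mulVec_sub, mulVec_add, ← mulVec_mulVec]
  linear_combination (norm := module) -hstatA

/-- Master identity (Theorem 3.1). -/
theorem master_identity {d : ℕ} (hd : 1 ≤ d) (θ : ℝ)
    (H : ℝ → Matrix (Fin d) (Fin d) ℝ) (b x₀ : ℝ → (Fin d → ℝ))
    (hH : DifferentiableAt ℝ H θ) (hb : DifferentiableAt ℝ b θ)
    (hx₀ : DifferentiableAt ℝ x₀ θ)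
    (hsym : (H θ).IsSymm) (hpd : (H θ).PosDef)
    (hcomm : H θ * deriv H θ = deriv H θ * H θ)
    (P : Polynomial ℝ) (hP0 : P.eval 0 = 1)
    (xstar : ℝ → (Fin d → ℝ))
    (hxstar : ∀ θ' : ℝ, xstar θ' = -((H θ')⁻¹.mulVec (b θ')))
    (xt : ℝ → (Fin d → ℝ))
    (hxt : ∀ θ' : ℝ, xt θ' =
      xstar θ' + ((Polynomial.aeval (H θ')) P).mulVec (x₀ θ' - xstar θ')) :
    deriv xt θ - deriv xstar θ =
      ((Polynomial.aeval (H θ)) P - (Polynomial.aeval (H θ)) P.derivative * H θ).mulVec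
          (deriv x₀ θ - deriv xstar θ)
        + ((Polynomial.aeval (H θ)) P.derivative).mulVec
            ((deriv H θ).mulVec (x₀ θ) + (H θ).mulVec (deriv x₀ θ) + deriv b θ) :=
  master_identity_general θ H b x₀ hH hb hx₀ hpd hcomm P xstar hxstar xt hxt
end

section
/- Corollary 3.3, large step size: Under the stated setting with residual polynomial P = (1 - (2/(L+ℓ))·X)^t (gradient descent with step size h = 2/(L+ℓ)) and integer t ≥ 1, writing κ = ℓ/L, one has ‖deriv xₜ θ - deriv x⋆ θ‖ ≤ ((1-κ)/(1+κ))^(t-1) · ((2t-1) · ‖deriv x₀ θ - deriv x⋆ θ‖ + (2t/(L+ℓ))·G). -/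
/-!
Differentiating the normal equations `H x⋆ + b = 0` gives `H x⋆' + H' x⋆ + b' = 0`. Because `H`
commutes with `H'`, the derivative of `P(H)` is `P'(H) H'`, so for every polynomial `P` the Jacobian
error of the iterate is `(P - P' X)(H) (x₀' - x⋆') + P'(H) g` with `g = H' x₀ + H x₀' + b'`.
For `P = (1 - hX)^t`, `h = 2/(L+ℓ)`, this equals
`(1 - hH)^(t-1) ((1 + (t-1) h H) (x₀' - x⋆') - t h g)`, and on the spectrum `[ℓ, L]` of `H` we have
`|1 - hλ| ≤ (L-ℓ)/(L+ℓ) = (1-κ)/(1+κ)` and `|1 + (t-1) h λ| ≤ 2t - 1`.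
-/

open Polynomial Matrix

attribute [local instance] Matrix.normedAddCommGroup Matrix.normedSpace

/-- The Euclidean norm on `Fin d → ℝ`. -/
noncomputable def euclNorm {d : ℕ} (v : Fin d → ℝ) : ℝ := Real.sqrt (∑ i, v i ^ 2)

section Bilinear

variable {𝕜 : Type*} [NontriviallyNormedField 𝕜] [CompleteSpace 𝕜] {E F G : Type*}
  [NormedAddCommGroup E] [NormedSpace 𝕜 E] [FiniteDimensional 𝕜 E]
  [NormedAddCommGroup F] [NormedSpace 𝕜 F] [FiniteDimensional 𝕜 F]
  [NormedAddCommGroup G] [NormedSpace 𝕜 G]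

theorem LinearMap.hasDerivAt_of_bilinear (B : E →ₗ[𝕜] F →ₗ[𝕜] G) {u : 𝕜 → E} {v : 𝕜 → F}
    {u' : E} {v' : F} {x : 𝕜} (hu : HasDerivAt u u' x) (hv : HasDerivAt v v' x) :
    HasDerivAt (fun y ↦ B (u y) (v y)) (B (u x) v' + B u' (v x)) x :=
  (LinearMap.toContinuousLinearMap (LinearMap.toContinuousLinearMap.toLinearMap ∘ₗ B)
    ).hasDerivAt_of_bilinear (fun _ ↦ hu) (fun _ ↦ hv)

end Bilinear

section MatrixCalculus

variable {𝕜 : Type*} [NontriviallyNormedField 𝕜] {n : Type*} [Fintype n]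
  {M : 𝕜 → Matrix n n 𝕜} {M' : Matrix n n 𝕜} {x : 𝕜}

theorem HasDerivAt.matrix_mulVec_s3 [CompleteSpace 𝕜] {v : 𝕜 → n → 𝕜} {v' : n → 𝕜}
    (hM : HasDerivAt M M' x) (hv : HasDerivAt v v' x) :
    HasDerivAt (fun y ↦ M y *ᵥ v y) (M x *ᵥ v' + M' *ᵥ v x) x :=
  (Matrix.mulVecBilin 𝕜 𝕜).hasDerivAt_of_bilinear hM hv

variable [DecidableEq n]

theorem HasDerivAt.matrix_mul_s3 [CompleteSpace 𝕜] {N : 𝕜 → Matrix n n 𝕜} {N' : Matrix n n 𝕜}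
    (hM : HasDerivAt M M' x) (hN : HasDerivAt N N' x) :
    HasDerivAt (fun y ↦ M y * N y) (M x * N' + M' * N x) x :=
  (LinearMap.mul 𝕜 (Matrix n n 𝕜)).hasDerivAt_of_bilinear hM hN

theorem HasDerivAt.aeval_of_commute [CompleteSpace 𝕜] (hM : HasDerivAt M M' x)
    (hc : Commute (M x) M') (p : 𝕜[X]) :
    HasDerivAt (fun y ↦ aeval (M y) p) (aeval (M x) (derivative p) * M') x := by
  induction p using Polynomial.induction_on with
  | C a =>
    simp only [aeval_C, derivative_C, map_zero, zero_mul]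
    exact hasDerivAt_const x _
  | add p q hp hq =>
    simp only [map_add, add_mul]
    exact hp.add hq
  | monomial k a ih =>
    rw [pow_succ, ← mul_assoc, derivative_mul, derivative_X, mul_one]
    convert ih.matrix_mul_s3 hM using 1
    · simp only [map_mul, aeval_X]
    · rw [add_comm]
      simp only [map_add, map_mul, aeval_X, add_mul, mul_assoc, hc.eq]

theorem DifferentiableAt.matrix_det (hM : DifferentiableAt 𝕜 M x) :
    DifferentiableAt 𝕜 (fun y ↦ (M y).det) x := by
  have h : ∀ i j, DifferentiableAt 𝕜 (fun y ↦ M y i j) x := fun i j ↦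
    differentiableAt_pi.1 (differentiableAt_pi.1 hM i) j
  simp only [det_apply]
  fun_prop

theorem DifferentiableAt.matrix_adjugate (hM : DifferentiableAt 𝕜 M x) :
    DifferentiableAt 𝕜 (fun y ↦ (M y).adjugate) x := by
  refine differentiableAt_pi.2 fun i ↦ differentiableAt_pi.2 fun j ↦ ?_
  simp only [adjugate_apply]
  refine DifferentiableAt.matrix_det
    (differentiableAt_pi.2 fun k ↦ differentiableAt_pi.2 fun l ↦ ?_)
  simp only [updateRow_apply]
  split_ifs
  · exact differentiableAt_const _
  · exact differentiableAt_pi.1 (differentiableAt_pi.1 hM k) l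

theorem DifferentiableAt.matrix_inv_s3 (hM : DifferentiableAt 𝕜 M x) (hx : IsUnit (M x).det) :
    DifferentiableAt 𝕜 (fun y ↦ (M y)⁻¹) x := by
  simp only [inv_def, Ring.inverse_eq_inv']
  exact (hM.matrix_det.inv hx.ne_zero).smul hM.matrix_adjugate

end MatrixCalculus

section Minimizer

variable {𝕜 : Type*} [NontriviallyNormedField 𝕜] [CompleteSpace 𝕜] {n : Type*} [Fintype n]
  {H : 𝕜 → Matrix n n 𝕜} {b : 𝕜 → n → 𝕜} {x : 𝕜}

theorem HasDerivAt.mulVec_add_eq_zero {xs : 𝕜 → n → 𝕜} {H' : Matrix n n 𝕜} {xs' b' : n → 𝕜}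
    (hH : HasDerivAt H H' x) (hxs : HasDerivAt xs xs' x) (hb : HasDerivAt b b' x)
    (hsol : ∀ᶠ y in nhds x, H y *ᵥ xs y + b y = 0) :
    H x *ᵥ xs' + H' *ᵥ xs x + b' = 0 :=
  ((hH.matrix_mulVec_s3 hxs).add hb).unique ((hasDerivAt_const x 0).congr_of_eventuallyEq hsol)

variable [DecidableEq n]

theorem DifferentiableAt.neg_inv_mulVec (hH : DifferentiableAt 𝕜 H x)
    (hb : DifferentiableAt 𝕜 b x) (hdet : IsUnit (H x).det) :
    DifferentiableAt 𝕜 (fun y ↦ -((H y)⁻¹ *ᵥ b y)) x :=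
  ((hH.matrix_inv_s3 hdet).hasDerivAt.matrix_mulVec_s3 hb.hasDerivAt).neg.differentiableAt

theorem mulVec_deriv_neg_inv_mulVec_add_eq_zero (hH : DifferentiableAt 𝕜 H x)
    (hb : DifferentiableAt 𝕜 b x) (hdet : IsUnit (H x).det) :
    H x *ᵥ deriv (fun y ↦ -((H y)⁻¹ *ᵥ b y)) x + deriv H x *ᵥ -((H x)⁻¹ *ᵥ b x)
      + deriv b x = 0 := by
  refine hH.hasDerivAt.mulVec_add_eq_zero (hH.neg_inv_mulVec hb hdet).hasDerivAt hb.hasDerivAt ?_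
  filter_upwards [hH.matrix_det.continuousAt.eventually_ne hdet.ne_zero] with y hy
  rw [mulVec_neg, mulVec_mulVec, mul_nonsing_inv _ (isUnit_iff_ne_zero.2 hy), one_mulVec,
    neg_add_cancel]

end Minimizer

section EuclNorm

variable {d : ℕ}

theorem euclNorm_eq_norm (v : Fin d → ℝ) : euclNorm v = ‖WithLp.toLp 2 v‖ := by
  simp [euclNorm, EuclideanSpace.norm_eq]

theorem euclNorm_eq_sqrt_dotProduct (v : Fin d → ℝ) : euclNorm v = √(v ⬝ᵥ v) := by
  simp [euclNorm, dotProduct, sq]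

theorem euclNorm_sub_le (v w : Fin d → ℝ) : euclNorm (v - w) ≤ euclNorm v + euclNorm w := by
  simpa only [euclNorm_eq_norm, WithLp.toLp_sub] using norm_sub_le _ _

theorem euclNorm_smul (a : ℝ) (v : Fin d → ℝ) : euclNorm (a • v) = |a| * euclNorm v := by
  simp only [euclNorm_eq_norm, WithLp.toLp_smul, norm_smul, Real.norm_eq_abs]

open scoped MatrixOrder in
theorem euclNorm_mulVec_le_of_posSemidef {S : Matrix (Fin d) (Fin d) ℝ} {c : ℝ} (hc : 0 ≤ c)
    (h₁ : (c • 1 - S).PosSemidef) (h₂ : (S + c • 1).PosSemidef) (v : Fin d → ℝ) :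
    euclNorm (S *ᵥ v) ≤ c * euclNorm v := by
  have hS : Sᵀ = S := by
    have h := h₂.isHermitian
    rw [IsHermitian, conjTranspose_eq_transpose_of_trivial, transpose_add, transpose_smul,
      transpose_one, add_left_inj] at h
    exact h
  have hsq : (c ^ 2 • 1 - S * S).PosSemidef := by
    have hcomm : Commute (c • 1 - S) (S + c • 1) := by
      simp only [Commute, SemiconjBy, sub_mul, mul_add, add_mul, mul_sub, smul_mul_assoc,
        mul_smul_comm, one_mul, mul_one]
      module
    have hfactor : c ^ 2 • 1 - S * S = (c • 1 - S) * (S + c • 1) := by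
      simp only [sub_mul, mul_add, smul_mul_assoc, mul_smul_comm, one_mul, mul_one]
      module
    rw [hfactor]
    exact (hcomm.mul_nonneg h₁.nonneg h₂.nonneg).posSemidef
  have hquad := hsq.dotProduct_mulVec_nonneg v
  simp only [sub_mulVec, smul_mulVec, one_mulVec, ← mulVec_mulVec, dotProduct_sub, dotProduct_smul,
    star_trivial, smul_eq_mul] at hquad
  rw [euclNorm_eq_sqrt_dotProduct, euclNorm_eq_sqrt_dotProduct, ← Real.sqrt_sq hc,
    ← Real.sqrt_mul (sq_nonneg c)]
  refine Real.sqrt_le_sqrt ?_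
  rw [dotProduct_mulVec, ← mulVec_transpose, hS, dotProduct_comm]
  linarith

end EuclNorm

section SpectralBounds

theorem Matrix.PosSemidef.smul_one_add_smul {n : Type*} [Fintype n] [DecidableEq n]
    {A : Matrix n n ℝ} {ℓ L α β : ℝ} (hlower : (A - ℓ • 1).PosSemidef)
    (hupper : (L • 1 - A).PosSemidef) (hℓ : 0 ≤ α + β * ℓ) (hL : 0 ≤ α + β * L) :
    (α • 1 + β • A).PosSemidef := by
  rcases le_total 0 β with hβ | hβ
  · have h : α • 1 + β • A = β • (A - ℓ • 1) + (α + β * ℓ) • (1 : Matrix n n ℝ) := by module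
    exact h ▸ (hlower.smul hβ).add (PosSemidef.one.smul hℓ)
  · have h : α • 1 + β • A = (-β) • (L • 1 - A) + (α + β * L) • (1 : Matrix n n ℝ) := by module
    exact h ▸ (hupper.smul (neg_nonneg.2 hβ)).add (PosSemidef.one.smul hL)

variable {d : ℕ}

theorem euclNorm_smul_one_add_smul_mulVec_le {A : Matrix (Fin d) (Fin d) ℝ}
    {ℓ L α β c : ℝ} (hlower : (A - ℓ • 1).PosSemidef) (hupper : (L • 1 - A).PosSemidef)
    (hℓ : |α + β * ℓ| ≤ c) (hL : |α + β * L| ≤ c) (v : Fin d → ℝ) :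
    euclNorm ((α • 1 + β • A) *ᵥ v) ≤ c * euclNorm v := by
  obtain ⟨hℓ₁, hℓ₂⟩ := abs_le.1 hℓ
  obtain ⟨hL₁, hL₂⟩ := abs_le.1 hL
  refine euclNorm_mulVec_le_of_posSemidef ((abs_nonneg _).trans hℓ) ?_ ?_ v
  · have h : c • 1 - (α • 1 + β • A) = (c - α) • 1 + (-β) • A := by module
    exact h ▸ hlower.smul_one_add_smul hupper (by linarith) (by linarith)
  · have h : α • 1 + β • A + c • 1 = (α + c) • 1 + β • A := by module
    exact h ▸ hlower.smul_one_add_smul hupper (by linarith) (by linarith)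

theorem euclNorm_pow_mulVec_le {S : Matrix (Fin d) (Fin d) ℝ} {c : ℝ} (hc : 0 ≤ c)
    (hS : ∀ v, euclNorm (S *ᵥ v) ≤ c * euclNorm v) (k : ℕ) (v : Fin d → ℝ) :
    euclNorm (S ^ k *ᵥ v) ≤ c ^ k * euclNorm v := by
  induction k generalizing v with
  | zero => simp
  | succ k ih =>
    calc euclNorm (S ^ (k + 1) *ᵥ v) = euclNorm (S ^ k *ᵥ (S *ᵥ v)) := by
          rw [pow_succ, mulVec_mulVec]
      _ ≤ c ^ k * (c * euclNorm v) := (ih _).trans (by gcongr; exact hS v)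
      _ = c ^ (k + 1) * euclNorm v := by ring

theorem euclNorm_one_sub_smul_mulVec_le {A : Matrix (Fin d) (Fin d) ℝ} {ℓ L : ℝ}
    (hℓ : 0 < ℓ) (hℓL : ℓ ≤ L) (hlower : (A - ℓ • 1).PosSemidef)
    (hupper : (L • 1 - A).PosSemidef) (v : Fin d → ℝ) :
    euclNorm ((1 - (2 / (L + ℓ)) • A) *ᵥ v) ≤ (L - ℓ) / (L + ℓ) * euclNorm v := by
  have hLℓ : 0 < L + ℓ := by linarith
  have hρ : 0 ≤ (L - ℓ) / (L + ℓ) := div_nonneg (by linarith) hLℓ.le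
  have hℓ' : 1 + -(2 / (L + ℓ)) * ℓ = (L - ℓ) / (L + ℓ) := by field_simp; ring
  have hL' : 1 + -(2 / (L + ℓ)) * L = -((L - ℓ) / (L + ℓ)) := by field_simp; ring
  have hA : 1 - (2 / (L + ℓ)) • A = (1 : ℝ) • 1 + (-(2 / (L + ℓ))) • A := by module
  rw [hA]
  refine euclNorm_smul_one_add_smul_mulVec_le hlower hupper ?_ ?_ v
  · rw [hℓ', abs_of_nonneg hρ]
  · rw [hL', abs_neg, abs_of_nonneg hρ]

theorem euclNorm_one_add_smul_mulVec_le {A : Matrix (Fin d) (Fin d) ℝ} {ℓ L : ℝ}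
    (hℓ : 0 < ℓ) (hℓL : ℓ ≤ L) (hlower : (A - ℓ • 1).PosSemidef)
    (hupper : (L • 1 - A).PosSemidef) (m : ℕ) (v : Fin d → ℝ) :
    euclNorm ((1 + (m * (2 / (L + ℓ))) • A) *ᵥ v) ≤ (2 * m + 1) * euclNorm v := by
  have hLℓ : 0 < L + ℓ := by linarith
  have hh : 0 ≤ m * (2 / (L + ℓ)) := by positivity
  have hL : 2 / (L + ℓ) * L ≤ 2 := by
    rw [div_mul_eq_mul_div, div_le_iff₀ hLℓ]
    linarith
  have hbound : ∀ μ, 0 ≤ μ → μ ≤ L → |1 + m * (2 / (L + ℓ)) * μ| ≤ 2 * m + 1 := by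
    intro μ hμ₀ hμ
    rw [abs_of_nonneg (by positivity)]
    linarith [mul_le_mul_of_nonneg_left hμ hh, mul_le_mul_of_nonneg_left hL m.cast_nonneg]
  have hA : 1 + (m * (2 / (L + ℓ))) • A = (1 : ℝ) • 1 + (m * (2 / (L + ℓ))) • A := by
    rw [one_smul]
  rw [hA]
  exact euclNorm_smul_one_add_smul_mulVec_le hlower hupper
    (hbound ℓ hℓ.le hℓL) (hbound L (hℓ.le.trans hℓL) le_rfl) v

theorem euclNorm_gradientDescent_error_le {A : Matrix (Fin d) (Fin d) ℝ} {ℓ L : ℝ}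
    (hℓ : 0 < ℓ) (hℓL : ℓ ≤ L) (hlower : (A - ℓ • 1).PosSemidef)
    (hupper : (L • 1 - A).PosSemidef) (m : ℕ) (r g : Fin d → ℝ) :
    euclNorm ((1 - (2 / (L + ℓ)) • A) ^ m *ᵥ
        ((1 + (m * (2 / (L + ℓ))) • A) *ᵥ r - ((m + 1) * (2 / (L + ℓ))) • g))
      ≤ ((L - ℓ) / (L + ℓ)) ^ m
        * ((2 * m + 1) * euclNorm r + (m + 1) * (2 / (L + ℓ)) * euclNorm g) := by
  have hLℓ : 0 < L + ℓ := by linarith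
  refine (euclNorm_pow_mulVec_le (div_nonneg (by linarith) hLℓ.le)
    (euclNorm_one_sub_smul_mulVec_le hℓ hℓL hlower hupper) m _).trans ?_
  gcongr
  refine (euclNorm_sub_le _ _).trans ?_
  rw [euclNorm_smul, abs_of_nonneg (by positivity)]
  gcongr
  exact euclNorm_one_add_smul_mulVec_le hℓ hℓL hlower hupper m r

end SpectralBounds

section GradientDescentPolynomial

variable {R : Type*} [CommRing R]

theorem derivative_one_sub_C_mul_X_pow_succ (a : R) (m : ℕ) :
    derivative ((1 - C a * X) ^ (m + 1)) = -C ((m + 1) * a) * (1 - C a * X) ^ m := by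
  rw [derivative_pow]
  simp only [derivative_sub, derivative_one, derivative_C_mul_X, Nat.add_sub_cancel, map_mul,
    map_add, map_natCast, map_one]
  push_cast
  ring

theorem one_sub_C_mul_X_pow_succ_sub_derivative_mul_X (a : R) (m : ℕ) :
    (1 - C a * X) ^ (m + 1) - derivative ((1 - C a * X) ^ (m + 1)) * X
      = (1 - C a * X) ^ m * (1 + C (m * a) * X) := by
  rw [derivative_one_sub_C_mul_X_pow_succ, map_mul, map_add, map_mul, map_natCast, map_one]
  ring

end GradientDescentPolynomial

section Iterate

variable {𝕜 : Type*} [NontriviallyNormedField 𝕜] [CompleteSpace 𝕜] {n : Type*} [Fintype n]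
  [DecidableEq n] {H : 𝕜 → Matrix n n 𝕜} {x₀ xs xt : 𝕜 → n → 𝕜} {H' : Matrix n n 𝕜}
  {x₀' xs' b' : n → 𝕜} {x : 𝕜}

theorem deriv_polynomial_iterate_sub (P : 𝕜[X]) (hH : HasDerivAt H H' x)
    (hc : Commute (H x) H') (hx₀ : HasDerivAt x₀ x₀' x) (hxs : HasDerivAt xs xs' x)
    (hxt : ∀ y, xt y = xs y + aeval (H y) P *ᵥ (x₀ y - xs y))
    (hstat : H x *ᵥ xs' + H' *ᵥ xs x + b' = 0) :
    deriv xt x - xs' = aeval (H x) (P - derivative P * X) *ᵥ (x₀' - xs')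
      + aeval (H x) (derivative P) *ᵥ (H' *ᵥ x₀ x + H x *ᵥ x₀' + b') := by
  have hderiv : HasDerivAt xt (xs' + (aeval (H x) P *ᵥ (x₀' - xs')
      + (aeval (H x) (derivative P) * H') *ᵥ (x₀ x - xs x))) x := by
    rw [show xt = _ from funext hxt]
    exact hxs.add ((hH.aeval_of_commute hc P).matrix_mulVec_s3 (hx₀.sub hxs))
  have hH' : H' *ᵥ (x₀ x - xs x) = H' *ᵥ x₀ x + H x *ᵥ x₀' + b' - H x *ᵥ (x₀' - xs') := by
    rw [mulVec_sub, mulVec_sub]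
    linear_combination (norm := module) -hstat
  rw [hderiv.deriv, add_sub_cancel_left, ← mulVec_mulVec, hH', map_sub, map_mul, aeval_X,
    sub_mulVec, ← mulVec_mulVec]
  simp only [mulVec_sub]
  abel

theorem deriv_gradientDescent_iterate_sub (h : 𝕜) (m : ℕ) (hH : HasDerivAt H H' x)
    (hc : Commute (H x) H') (hx₀ : HasDerivAt x₀ x₀' x) (hxs : HasDerivAt xs xs' x)
    (hxt : ∀ y, xt y = xs y + aeval (H y) ((1 - C h * X) ^ (m + 1)) *ᵥ (x₀ y - xs y))
    (hstat : H x *ᵥ xs' + H' *ᵥ xs x + b' = 0) :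
    deriv xt x - xs' = (1 - h • H x) ^ m *ᵥ ((1 + (m * h) • H x) *ᵥ (x₀' - xs')
      - ((m + 1) * h) • (H' *ᵥ x₀ x + H x *ᵥ x₀' + b')) := by
  rw [deriv_polynomial_iterate_sub _ hH hc hx₀ hxs hxt hstat,
    one_sub_C_mul_X_pow_succ_sub_derivative_mul_X, derivative_one_sub_C_mul_X_pow_succ,
    aeval_mul, aeval_mul, map_pow, map_neg, aeval_C, Algebra.algebraMap_eq_smul_one]
  simp only [map_sub, map_add, map_one, map_mul, aeval_C, aeval_X, Algebra.algebraMap_eq_smul_one,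
    smul_mul_assoc, one_mul, smul_smul, neg_mulVec, smul_mulVec, one_mulVec, ← mulVec_mulVec,
    mulVec_sub, mulVec_smul]
  abel

end Iterate

theorem jacobian_rate_gd_large_step_general {d : ℕ} (θ : ℝ)
    (H : ℝ → Matrix (Fin d) (Fin d) ℝ) (b x₀ : ℝ → (Fin d → ℝ))
    (hH : DifferentiableAt ℝ H θ) (hb : DifferentiableAt ℝ b θ)
    (hx₀ : DifferentiableAt ℝ x₀ θ)
    (ℓ L : ℝ) (hℓ : 0 < ℓ) (hℓL : ℓ ≤ L)
    (hlower : (H θ - ℓ • 1).PosSemidef) (hupper : (L • 1 - H θ).PosSemidef)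
    (hcomm : H θ * deriv H θ = deriv H θ * H θ)
    (t : ℕ) (ht : 1 ≤ t)
    (P : Polynomial ℝ) (hP : P = (1 - Polynomial.C (2 / (L + ℓ)) * Polynomial.X) ^ t)
    (xstar : ℝ → (Fin d → ℝ))
    (hxstar : ∀ θ' : ℝ, xstar θ' = -((H θ')⁻¹.mulVec (b θ')))
    (xt : ℝ → (Fin d → ℝ))
    (hxt : ∀ θ' : ℝ, xt θ' =
      xstar θ' + ((Polynomial.aeval (H θ')) P).mulVec (x₀ θ' - xstar θ'))
    (G : ℝ)
    (hG : G = euclNorm ((deriv H θ).mulVec (x₀ θ) + (H θ).mulVec (deriv x₀ θ) + deriv b θ))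
    (κ : ℝ) (hκ : κ = ℓ / L) :
    euclNorm (deriv xt θ - deriv xstar θ) ≤
      ((1 - κ) / (1 + κ)) ^ (t - 1) *
        ((2 * (t : ℝ) - 1) * euclNorm (deriv x₀ θ - deriv xstar θ)
          + (2 * (t : ℝ) / (L + ℓ)) * G) := by
  obtain ⟨m, rfl⟩ : ∃ m, t = m + 1 := ⟨t - 1, by omega⟩
  have hdet : IsUnit (H θ).det := by
    have hpd := (PosDef.one.smul hℓ).add_posSemidef hlower
    rw [add_sub_cancel] at hpd
    exact (isUnit_iff_isUnit_det _).1 hpd.isUnit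
  obtain rfl : xstar = fun y ↦ -((H y)⁻¹ *ᵥ b y) := funext hxstar
  subst hP hG
  have hLℓ : 0 < L + ℓ := by linarith
  have hρ : (1 - κ) / (1 + κ) = (L - ℓ) / (L + ℓ) := by
    have hL : 0 < L := by linarith
    rw [hκ, div_eq_div_iff (add_pos one_pos (div_pos hℓ hL)).ne' hLℓ.ne']
    field_simp
  have hcoeff₁ : 2 * ((m : ℝ) + 1) - 1 = 2 * m + 1 := by ring
  have hcoeff₂ : 2 * ((m : ℝ) + 1) / (L + ℓ) = (m + 1) * (2 / (L + ℓ)) := by ring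
  rw [deriv_gradientDescent_iterate_sub _ m hH.hasDerivAt hcomm hx₀.hasDerivAt
      (hH.neg_inv_mulVec hb hdet).hasDerivAt hxt
      (mulVec_deriv_neg_inv_mulVec_add_eq_zero hH hb hdet),
    hρ, Nat.add_sub_cancel, Nat.cast_succ, hcoeff₁, hcoeff₂]
  exact euclNorm_gradientDescent_error_le hℓ hℓL hlower hupper m _ _

/-- Corollary 3.3, large step size `h = 2/(L+ℓ)`. -/
theorem jacobian_rate_gd_large_step {d : ℕ} (hd : 1 ≤ d) (θ : ℝ)
    (H : ℝ → Matrix (Fin d) (Fin d) ℝ) (b x₀ : ℝ → (Fin d → ℝ))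
    (hH : DifferentiableAt ℝ H θ) (hb : DifferentiableAt ℝ b θ)
    (hx₀ : DifferentiableAt ℝ x₀ θ)
    (ℓ L : ℝ) (hℓ : 0 < ℓ) (hℓL : ℓ ≤ L)
    (hsym : (H θ).IsSymm)
    (hlower : (H θ - ℓ • 1).PosSemidef) (hupper : (L • 1 - H θ).PosSemidef)
    (hcomm : H θ * deriv H θ = deriv H θ * H θ)
    (t : ℕ) (ht : 1 ≤ t)
    (P : Polynomial ℝ) (hP : P = (1 - Polynomial.C (2 / (L + ℓ)) * Polynomial.X) ^ t)
    (xstar : ℝ → (Fin d → ℝ))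
    (hxstar : ∀ θ' : ℝ, xstar θ' = -((H θ')⁻¹.mulVec (b θ')))
    (xt : ℝ → (Fin d → ℝ))
    (hxt : ∀ θ' : ℝ, xt θ' =
      xstar θ' + ((Polynomial.aeval (H θ')) P).mulVec (x₀ θ' - xstar θ'))
    (G : ℝ)
    (hG : G = euclNorm ((deriv H θ).mulVec (x₀ θ) + (H θ).mulVec (deriv x₀ θ) + deriv b θ))
    (κ : ℝ) (hκ : κ = ℓ / L) :
    euclNorm (deriv xt θ - deriv xstar θ) ≤
      ((1 - κ) / (1 + κ)) ^ (t - 1) *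
        ((2 * (t : ℝ) - 1) * euclNorm (deriv x₀ θ - deriv xstar θ)
          + (2 * (t : ℝ) / (L + ℓ)) * G) :=
  jacobian_rate_gd_large_step_general θ H b x₀ hH hb hx₀ ℓ L hℓ hℓL hlower hupper hcomm t ht P hP
    xstar hxstar xt hxt G hG κ hκ
end

section
/- Monotonicity threshold (Corollary 3.4, core inequality): For every real number c with 0 < c < √2 and every natural number t ≥ 1, one has |1 - c|^t · (1 + t·c) ≤ |1 - c|^(t-1) · (1 + (t-1)·c); that is, the sequence t ↦ |1 - c|^(t-1)·(1 + (t-1)·c) is nonincreasing for t ≥ 1. (Taking c = h·λ for λ ∈ [ℓ,L], this shows the gradient-descent Jacobian bound with G = 0 is monotonically decreasing whenever the step size satisfies 0 < h < √2/L.) -/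
/-- Monotonicity threshold (Corollary 3.4, core inequality): for `0 < c < √2`
the sequence `t ↦ |1 - c|^(t-1) * (1 + (t-1)·c)` is nonincreasing for `t ≥ 1`. -/
theorem gd_bound_monotone_of_lt_sqrt_two (c : ℝ) (hc0 : 0 < c) (hc2 : c < Real.sqrt 2)
    (t : ℕ) (ht : 1 ≤ t) :
    |1 - c| ^ t * (1 + (t : ℝ) * c) ≤ |1 - c| ^ (t - 1) * (1 + ((t : ℝ) - 1) * c) := by
  obtain ⟨s, rfl⟩ : ∃ s, t = s + 1 := ⟨t - 1, (Nat.succ_pred_eq_of_pos ht).symm⟩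
  have hc2' : c ^ 2 < 2 := by
    have := Real.sq_sqrt (by norm_num : (2:ℝ) ≥ 0)
    nlinarith [Real.sqrt_nonneg 2]
  set a := |1 - c| with ha
  have ha0 : 0 ≤ a := abs_nonneg _
  have key : a * (1 + c) ≤ 1 := by
    rcases le_or_gt c 1 with h | h
    · rw [ha, abs_of_nonneg (by linarith)]; nlinarith
    · rw [ha, abs_of_nonpos (by linarith)]; nlinarith
  simp only [Nat.add_sub_cancel]
  push_cast
  have hs : (0:ℝ) ≤ s := Nat.cast_nonneg s
  have hpow : (0:ℝ) ≤ a ^ s := pow_nonneg ha0 s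
  have ha1 : a ≤ 1 := by nlinarith
  have step : a * (1 + ((s:ℝ) + 1) * c) ≤ 1 + (((s:ℝ) + 1) - 1) * c := by
    nlinarith [mul_nonneg (mul_nonneg hs hc0.le) (sub_nonneg.mpr ha1)]
  calc a ^ (s + 1) * (1 + ((s:ℝ) + 1) * c) = a ^ s * (a * (1 + ((s:ℝ)+1)*c)) := by ring
    _ ≤ a ^ s * (1 + (((s:ℝ)+1) - 1) * c) := by
        apply mul_le_mul_of_nonneg_left step hpow
    _ = a ^ s * (1 + (((s:ℝ)+1) - 1) * c) := rfl
end

section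
/- Optimal residual polynomial for a Sobolev-type inner product (Proposition 4.3): Let n be a natural number and let B be a symmetric bilinear form on real polynomials that is positive definite on the subspace of polynomials of degree ≤ n. Let S₀, …, Sₙ be real polynomials with natDegree Sᵢ = i, Sᵢ.eval 0 = 1, and B Sᵢ Sⱼ = 0 whenever i ≠ j. Set aᵢ = 1/(B Sᵢ Sᵢ), A = Σᵢ₌₀ⁿ aᵢ, and P⋆ = A⁻¹ • Σᵢ₌₀ⁿ aᵢ • Sᵢ. Then (i) B P⋆ P⋆ = 1/A, and (ii) for every real polynomial P with P.natDegree ≤ n and P.eval 0 = 1, one has B P P ≥ 1/A; i.e., P⋆ minimizes B P P over residual polynomials of degree ≤ n. -/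
open Polynomial

/-- Any polynomial of degree at most `n` is a linear combination of nonzero polynomials
`S i` with `natDegree (S i) = i` for `i = 0, …, n`. -/
lemma exists_combination_of_natDegree_eq (n : ℕ) (S : Fin (n + 1) → Polynomial ℝ)
    (hSdeg : ∀ i : Fin (n + 1), (S i).natDegree = (i : ℕ))
    (hSne : ∀ i, S i ≠ 0) :
    ∀ m : ℕ, m ≤ n → ∀ P : Polynomial ℝ, P.natDegree ≤ m →
      ∃ c : Fin (n + 1) → ℝ, P = ∑ i, c i • S i := by
  intro m
  induction m with
  | zero =>
    intro _ P hP
    have h0 : (S 0).natDegree = 0 := by simpa using hSdeg 0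
    have hc0 : (S 0).coeff 0 ≠ 0 := by
      intro h
      apply hSne 0
      rw [Polynomial.eq_C_of_natDegree_le_zero h0.le, h, map_zero]
    refine ⟨Pi.single 0 (P.coeff 0 / (S 0).coeff 0), ?_⟩
    rw [Finset.sum_eq_single 0 (fun j _ hj => by rw [Pi.single_eq_of_ne hj, zero_smul])
      (by simp), Pi.single_eq_same]
    rw [Polynomial.eq_C_of_natDegree_le_zero hP,
      Polynomial.eq_C_of_natDegree_le_zero h0.le, smul_C]
    simp [div_mul_cancel₀ _ hc0]
  | succ m ih =>
    intro hmn P hP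
    set i : Fin (n + 1) := ⟨m + 1, by omega⟩ with hi
    have hdi : (S i).natDegree = m + 1 := by rw [hSdeg i]
    have hlc : (S i).coeff (m + 1) ≠ 0 := by
      rw [← hdi]
      exact Polynomial.leadingCoeff_ne_zero.mpr (hSne i)
    set k : ℝ := P.coeff (m + 1) / (S i).coeff (m + 1) with hk
    set Q : Polynomial ℝ := P - k • S i with hQ
    have hQdeg : Q.natDegree ≤ m := by
      rw [Polynomial.natDegree_le_iff_coeff_eq_zero]
      intro j hj
      rcases eq_or_lt_of_le (Nat.succ_le_of_lt hj) with h | h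
      · rw [hQ, Polynomial.coeff_sub, Polynomial.coeff_smul, ← h, hk, smul_eq_mul,
          div_mul_cancel₀ _ hlc, sub_self]
      · rw [hQ, Polynomial.coeff_sub, Polynomial.coeff_smul,
          Polynomial.coeff_eq_zero_of_natDegree_lt (lt_of_le_of_lt hP h),
          Polynomial.coeff_eq_zero_of_natDegree_lt (by rw [hdi]; exact h),
          smul_zero, sub_self]
    obtain ⟨c, hc⟩ := ih (by omega) Q hQdeg
    refine ⟨fun j => c j + (Pi.single i k : Fin (n+1) → ℝ) j, ?_⟩
    have : ∑ j, (c j + (Pi.single i k : Fin (n+1) → ℝ) j) • S j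
        = (∑ j, c j • S j) + ∑ j, (Pi.single i k : Fin (n+1) → ℝ) j • S j := by
      rw [← Finset.sum_add_distrib]
      exact Finset.sum_congr rfl fun j _ => by rw [add_smul]
    rw [this, ← hc, Finset.sum_eq_single i
      (fun j _ hj => by rw [Pi.single_eq_of_ne hj, zero_smul]) (by simp),
      Pi.single_eq_same, hQ, sub_add_cancel]

/-- Optimal residual polynomial for a Sobolev-type inner product (Proposition 4.3). -/
theorem optimal_sobolev_residual_polynomial (n : ℕ)
    (B : LinearMap.BilinForm ℝ (Polynomial ℝ))
    (hBsymm : ∀ p q : Polynomial ℝ, B p q = B q p)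
    (hBpos : ∀ p : Polynomial ℝ, p.natDegree ≤ n → p ≠ 0 → 0 < B p p)
    (S : Fin (n + 1) → Polynomial ℝ)
    (hSdeg : ∀ i : Fin (n + 1), (S i).natDegree = (i : ℕ))
    (hS0 : ∀ i : Fin (n + 1), (S i).eval 0 = 1)
    (hSorth : ∀ i j : Fin (n + 1), i ≠ j → B (S i) (S j) = 0)
    (a : Fin (n + 1) → ℝ) (ha : ∀ i, a i = (B (S i) (S i))⁻¹)
    (A : ℝ) (hA : A = ∑ i, a i)
    (Pstar : Polynomial ℝ) (hPstar : Pstar = A⁻¹ • ∑ i, a i • S i) :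
    B Pstar Pstar = 1 / A ∧
      ∀ P : Polynomial ℝ, P.natDegree ≤ n → P.eval 0 = 1 → 1 / A ≤ B P P := by
  -- basic positivity facts
  have hSne : ∀ i, S i ≠ 0 := by
    intro i h
    have := hS0 i
    rw [h] at this
    simp at this
  have hd : ∀ i : Fin (n + 1), 0 < B (S i) (S i) := by
    intro i
    refine hBpos _ ?_ (hSne i)
    rw [hSdeg i]
    omega
  have hapos : ∀ i, 0 < a i := fun i => by rw [ha i]; exact inv_pos.mpr (hd i)
  have hdinv : ∀ i, B (S i) (S i) = (a i)⁻¹ := fun i => by rw [ha i, inv_inv]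
  have hApos : 0 < A := by
    rw [hA]
    exact Finset.sum_pos (fun i _ => hapos i) Finset.univ_nonempty
  -- expansion of B on combinations
  have hexp : ∀ c : Fin (n + 1) → ℝ,
      B (∑ i, c i • S i) (∑ i, c i • S i) = ∑ i, c i ^ 2 * B (S i) (S i) := by
    intro c
    rw [map_sum]
    refine Finset.sum_congr rfl fun i _ => ?_
    rw [map_smul, smul_eq_mul, map_sum, LinearMap.sum_apply]
    rw [Finset.sum_eq_single i
      (fun j _ hj => by
        rw [map_smul, LinearMap.smul_apply, smul_eq_mul, hSorth j i hj, mul_zero])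
      (by simp)]
    rw [map_smul, LinearMap.smul_apply, smul_eq_mul]
    ring
  -- sum of coefficients equals eval at 0
  have hsum : ∀ (c : Fin (n + 1) → ℝ) (P : Polynomial ℝ), P = ∑ i, c i • S i →
      P.eval 0 = ∑ i, c i := by
    intro c P hc
    rw [hc, Polynomial.eval_finset_sum]
    exact Finset.sum_congr rfl fun i _ => by
      rw [Polynomial.eval_smul, hS0 i, smul_eq_mul, mul_one]
  constructor
  · -- value at the optimal polynomial
    have hPc : Pstar = ∑ i, (A⁻¹ * a i) • S i := by
      rw [hPstar, Finset.smul_sum]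
      exact Finset.sum_congr rfl fun i _ => by rw [smul_smul]
    rw [hPc, hexp]
    have : ∀ i : Fin (n + 1), (A⁻¹ * a i) ^ 2 * B (S i) (S i) = A⁻¹ ^ 2 * a i := by
      intro i
      rw [hdinv i]
      field_simp [(hapos i).ne']
    rw [Finset.sum_congr rfl fun i _ => this i, ← Finset.mul_sum, ← hA]
    rw [one_div, sq]
    field_simp [hApos.ne']
  · -- optimality
    intro P hPdeg hPeval
    obtain ⟨c, hc⟩ := exists_combination_of_natDegree_eq n S hSdeg hSne n le_rfl P hPdeg
    have hcs : ∑ i, c i = 1 := by rw [← hsum c P hc, hPeval]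
    have hBPP : B P P = ∑ i, c i ^ 2 / a i := by
      rw [hc, hexp]
      exact Finset.sum_congr rfl fun i _ => by rw [hdinv i, div_eq_mul_inv]
    calc 1 / A = (∑ i, c i) ^ 2 / ∑ i, a i := by rw [hcs, one_pow, hA]
      _ ≤ ∑ i, c i ^ 2 / a i :=
          Finset.sq_sum_div_le_sum_sq_div _ _ fun i _ => hapos i
      _ = B P P := hBPP.symm
end

section
/- Peak of the burn-in phase for gradient descent (second part of Corollary 3.3): For every real κ with 0 < κ < 1 and every natural number t ≥ 1, ((1-κ)/(1+κ))^(t-1) · (2t - 1) ≤ 2/κ. Hence with G = 0 and step size h = 2/(L+ℓ), the worst-case Jacobian suboptimality bound of gradient descent never exceeds (2/κ)·‖∂x₀(θ) - ∂x⋆(θ)‖. -/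
/-!
Write `ρ = (1-κ)/(1+κ)`. Since `ρ (1 + 2κ) ≤ 1`, Bernoulli's inequality gives
`ρⁿ (1 + 2nκ) ≤ (ρ (1 + 2κ))ⁿ ≤ 1`, and `κ (2n + 1) ≤ 1 + 2nκ` because `κ ≤ 1`.
Hence the burn-in factor at `t = n + 1` is at most `1/κ`, which is half the claimed bound.
-/

theorem pow_mul_one_add_mul_le_one {r a : ℝ} (hr : 0 ≤ r) (ha : 0 ≤ a) (h : r * (1 + a) ≤ 1)
    (n : ℕ) : r ^ n * (1 + n * a) ≤ 1 :=
  calc r ^ n * (1 + n * a) ≤ r ^ n * (1 + a) ^ n := by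
        gcongr
        exact one_add_mul_le_pow (by linarith) n
    _ = (r * (1 + a)) ^ n := (mul_pow r (1 + a) n).symm
    _ ≤ 1 := pow_le_one₀ (by positivity) h

theorem div_one_add_mul_one_add_two_mul_le_one {κ : ℝ} (hκ : 0 < 1 + κ) :
    (1 - κ) / (1 + κ) * (1 + 2 * κ) ≤ 1 := by
  rw [div_mul_eq_mul_div, div_le_one hκ]
  nlinarith [sq_nonneg κ]

theorem burn_in_factor_le_inv {κ : ℝ} (hκ0 : 0 < κ) (hκ1 : κ ≤ 1) (n : ℕ) :
    ((1 - κ) / (1 + κ)) ^ n * (2 * n + 1) ≤ 1 / κ := by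
  have hρ : 0 ≤ (1 - κ) / (1 + κ) := div_nonneg (by linarith) (by linarith)
  have hbern := pow_mul_one_add_mul_le_one hρ (by linarith)
    (div_one_add_mul_one_add_two_mul_le_one (by linarith)) n
  have hlin : κ * (2 * n + 1) ≤ 1 + n * (2 * κ) := by nlinarith [n.cast_nonneg (α := ℝ)]
  rw [le_div_iff₀ hκ0]
  calc ((1 - κ) / (1 + κ)) ^ n * (2 * n + 1) * κ
      = ((1 - κ) / (1 + κ)) ^ n * (κ * (2 * n + 1)) := by ring
    _ ≤ ((1 - κ) / (1 + κ)) ^ n * (1 + n * (2 * κ)) := by gcongr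
    _ ≤ 1 := hbern

/-- Peak of the burn-in phase for gradient descent (second part of Corollary 3.3):
`((1-κ)/(1+κ))^(t-1) * (2t - 1) ≤ 2/κ` for `0 < κ < 1` and `t ≥ 1`. -/
theorem gd_burn_in_peak (κ : ℝ) (hκ0 : 0 < κ) (hκ1 : κ < 1) (t : ℕ) (ht : 1 ≤ t) :
    ((1 - κ) / (1 + κ)) ^ (t - 1) * (2 * (t : ℝ) - 1) ≤ 2 / κ := by
  obtain ⟨n, rfl⟩ := Nat.exists_eq_add_of_le' ht
  have hpeak := burn_in_factor_le_inv hκ0 hκ1.le n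
  calc ((1 - κ) / (1 + κ)) ^ (n + 1 - 1) * (2 * ((n + 1 : ℕ) : ℝ) - 1)
      = ((1 - κ) / (1 + κ)) ^ n * (2 * n + 1) := by push_cast; ring_nf
    _ ≤ 1 / κ := hpeak
    _ ≤ 2 / κ := by gcongr; norm_num
end

section
/- Chebyshev Jacobian-error polynomial bound (polynomial core of Theorem 3.5): Let 0 < ℓ < L, κ = ℓ/L, ξ = (1-√κ)/(1+√κ), t ≥ 1 a natural number, and define Cₜ(λ) = Tₜ(m(λ))/Tₜ(m(0)) with m(λ) = (2λ - L - ℓ)/(L - ℓ). Then for every λ ∈ [ℓ, L], |Cₜ(λ) - λ · Cₜ'(λ)| ≤ (2/(ξ^t + ξ^(-t))) · |2t²/(1-κ) - 1|, where Cₜ' denotes the derivative of Cₜ. -/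
/-!
With `x = m(λ) ∈ [-1, 1]` and `b = (L + ℓ)/(L - ℓ)`, the chain rule gives
`Cₜ(λ) - λ Cₜ'(λ) = (Tₜ(x) - (x + b) Tₜ'(x)) / Tₜ(-b)`. On `[-1, 1]` we have `|Tₜ'| ≤ t²`, and the
identity `x Tₜ' - Tₜ = (t - 1) x Uₜ₋₁ + Uₜ₋₂` together with `|Uₖ| ≤ k + 1` gives
`|Tₜ - x Tₜ'| ≤ t² - 1`, so the numerator is at most `(1 + b) t² - 1 = 2t²/(1 - κ) - 1`.
For the denominator, `b = cosh (log ξ)`, hence `|Tₜ(-b)| = cosh (t log ξ) = (ξ^t + ξ^(-t))/2`.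
-/

open Polynomial Polynomial.Chebyshev

namespace Polynomial.Chebyshev

theorem abs_eval_derivative_T_real_le (n : ℤ) {x : ℝ} (hx : |x| ≤ 1) :
    |(derivative (T ℝ n)).eval x| ≤ (n : ℝ) ^ 2 := by
  simpa [derivative_T_eval_one] using abs_iterate_derivative_T_real_le n 1 hx

theorem abs_eval_U_real_le (n : ℤ) {x : ℝ} (hx : |x| ≤ 1) :
    |(U ℝ n).eval x| ≤ |(n : ℝ) + 1| := by
  rcases eq_or_ne ((n : ℝ) + 1) 0 with hn | hn
  · have : n = -1 := by exact_mod_cast eq_neg_of_add_eq_zero_left hn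
    simp [this]
  have h : |(n : ℝ) + 1| * |(U ℝ n).eval x| ≤ |(n : ℝ) + 1| * |(n : ℝ) + 1| := by
    simpa [T_derivative_eq_U, abs_mul, ← sq] using abs_eval_derivative_T_real_le (n + 1) hx
  exact le_of_mul_le_mul_left h (abs_pos.mpr hn)

theorem X_mul_derivative_T_sub_T (R : Type*) [CommRing R] (n : ℤ) :
    X * derivative (T R n) - T R n = ((n : R[X]) - 1) * (X * U R (n - 1)) + U R (n - 2) := by
  rw [T_derivative_eq_U, T_eq_U_sub_X_mul_U R n]
  linear_combination -U_sub_two R n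

theorem abs_eval_X_mul_derivative_T_sub_T_real_le {n : ℕ} (hn : 1 ≤ n) {x : ℝ} (hx : |x| ≤ 1) :
    |x * (derivative (T ℝ n)).eval x - (T ℝ n).eval x| ≤ (n : ℝ) ^ 2 - 1 := by
  have h := congrArg (eval x) (X_mul_derivative_T_sub_T ℝ n)
  simp only [eval_sub, eval_mul, eval_add, eval_X, eval_one, eval_intCast] at h
  have hn' : (1 : ℝ) ≤ n := by exact_mod_cast hn
  have hU₁ : |(U ℝ (n - 1)).eval x| ≤ n := by
    simpa using abs_eval_U_real_le (n - 1) hx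
  have hU₂ : |(U ℝ (n - 2)).eval x| ≤ n - 1 := by
    have := abs_eval_U_real_le (n - 2) hx
    push_cast at this
    rwa [show (n : ℝ) - 2 + 1 = n - 1 by ring,
      abs_of_nonneg (a := (n : ℝ) - 1) (by linarith)] at this
  rw [h]
  push_cast
  calc |((n : ℝ) - 1) * (x * (U ℝ (n - 1)).eval x) + (U ℝ (n - 2)).eval x|
      ≤ ((n : ℝ) - 1) * (1 * n) + (n - 1) := by
        refine (abs_add_le _ _).trans (add_le_add ?_ hU₂)
        rw [abs_mul, abs_mul, abs_of_nonneg (by linarith : (0 : ℝ) ≤ n - 1)]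
        gcongr
    _ = (n : ℝ) ^ 2 - 1 := by ring

theorem eval_T_real_half_add_inv (n : ℤ) {y : ℝ} (hy : 0 < y) :
    (T ℝ n).eval ((y + y⁻¹) / 2) = (y ^ n + y ^ (-n)) / 2 := by
  have hexp (m : ℤ) : Real.exp (m * Real.log y) = y ^ m := by
    rw [mul_comm, ← Real.rpow_def_of_pos hy, Real.rpow_intCast]
  have hcosh : (y + y⁻¹) / 2 = Real.cosh (Real.log y) := by
    rw [Real.cosh_eq, Real.exp_neg, Real.exp_log hy]
  rw [hcosh, T_real_cosh, Real.cosh_eq, ← neg_mul, ← Int.cast_neg, hexp, hexp]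

theorem abs_eval_T_neg {R : Type*} [CommRing R] [LinearOrder R] [IsStrictOrderedRing R]
    (n : ℤ) (x : R) :
    |(T R n).eval (-x)| = |(T R n).eval x| := by
  simp [abs_mul]

theorem abs_eval_T_sub_add_mul_derivative_le {n : ℕ} (hn : 1 ≤ n) {x c : ℝ} (hx : |x| ≤ 1)
    (hc : 0 ≤ c) :
    |(T ℝ n).eval x - (x + c) * (derivative (T ℝ n)).eval x| ≤ (1 + c) * n ^ 2 - 1 := by
  have hT' := abs_eval_derivative_T_real_le n hx
  have hXT' := abs_eval_X_mul_derivative_T_sub_T_real_le hn hx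
  push_cast at hT'
  set p := (T ℝ n).eval x
  set q := (derivative (T ℝ n)).eval x
  calc |p - (x + c) * q| = |(p - x * q) - c * q| := by ring_nf
    _ ≤ |p - x * q| + |c * q| := abs_sub _ _
    _ = |x * q - p| + c * |q| := by rw [abs_sub_comm, abs_mul, abs_of_nonneg hc]
    _ ≤ ((n : ℝ) ^ 2 - 1) + c * n ^ 2 := by gcongr
    _ = (1 + c) * n ^ 2 - 1 := by ring

end Polynomial.Chebyshev

theorem Polynomial.eval_C_mul_comp_sub_mul_derivative {R : Type*} [CommRing R] (P : R[X])
    (k a c y : R) :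
    (C k * P.comp (C a * X - C c)).eval y - y * (C k * P.comp (C a * X - C c)).derivative.eval y
      = k * (P.eval (a * y - c) - (a * y - c + c) * P.derivative.eval (a * y - c)) := by
  simp only [derivative_C_mul, derivative_comp, derivative_sub, derivative_X, derivative_C,
    sub_zero, mul_one, eval_mul, eval_C, eval_comp, eval_sub, eval_X]
  ring

section ShiftedChebyshev

variable {ℓ L : ℝ}

theorem abs_two_div_sub_mul_sub_add_div_sub_le_one (hℓL : ℓ < L) {lam : ℝ}
    (hlam : lam ∈ Set.Icc ℓ L) : |2 / (L - ℓ) * lam - (L + ℓ) / (L - ℓ)| ≤ 1 := by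
  have hd : 0 < L - ℓ := sub_pos.mpr hℓL
  rw [show 2 / (L - ℓ) * lam - (L + ℓ) / (L - ℓ) = (2 * lam - (L + ℓ)) / (L - ℓ) by ring,
    abs_div, abs_of_pos hd, div_le_one hd, abs_le]
  constructor <;> linarith [hlam.1, hlam.2]

theorem one_add_add_div_sub (hL : L ≠ 0) (hℓL : ℓ ≠ L) :
    1 + (L + ℓ) / (L - ℓ) = 2 / (1 - ℓ / L) := by
  have : L - ℓ ≠ 0 := sub_ne_zero.mpr hℓL.symm
  field_simp
  ring

theorem add_div_sub_eq_half_add_inv (hℓ : 0 ≤ ℓ) (hℓL : ℓ < L) {ξ : ℝ}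
    (hξ : ξ = (1 - √(ℓ / L)) / (1 + √(ℓ / L))) : (L + ℓ) / (L - ℓ) = (ξ + ξ⁻¹) / 2 := by
  have hL : 0 < L := hℓ.trans_lt hℓL
  set s := √(ℓ / L)
  have hs0 : 0 ≤ s := Real.sqrt_nonneg _
  have hs1 : s < 1 := (Real.sqrt_lt' one_pos).mpr (by rwa [one_pow, div_lt_one hL])
  have hℓs : ℓ = s ^ 2 * L := by rw [Real.sq_sqrt (by positivity)]; field_simp
  have h₁ : 1 - s ≠ 0 := by linarith
  have h₂ : 1 + s ≠ 0 := by linarith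
  have h₃ : 1 - s ^ 2 ≠ 0 := by nlinarith
  rw [hξ, inv_div, hℓs]
  field_simp
  ring

end ShiftedChebyshev

/-- Chebyshev Jacobian-error polynomial bound (polynomial core of Theorem 3.5):
for the shifted normalized Chebyshev residual polynomial `Cₜ`, on `[ℓ, L]` one has
`|Cₜ(λ) - λ Cₜ'(λ)| ≤ (2/(ξ^t + ξ^(-t))) · |2t²/(1-κ) - 1|`. -/
theorem chebyshev_jacobian_error_poly_bound (ℓ L κ ξ : ℝ) (hℓ : 0 < ℓ) (hℓL : ℓ < L)
    (hκ : κ = ℓ / L) (hξ : ξ = (1 - Real.sqrt κ) / (1 + Real.sqrt κ))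
    (t : ℕ) (ht : 1 ≤ t)
    (Ct : Polynomial ℝ)
    (hCt : Ct = Polynomial.C (((Polynomial.Chebyshev.T ℝ (t : ℤ)).eval (-(L + ℓ) / (L - ℓ)))⁻¹) *
        (Polynomial.Chebyshev.T ℝ (t : ℤ)).comp
          (Polynomial.C (2 / (L - ℓ)) * Polynomial.X - Polynomial.C ((L + ℓ) / (L - ℓ)))) :
    ∀ lam ∈ Set.Icc ℓ L,
      |Ct.eval lam - lam * Ct.derivative.eval lam| ≤
        (2 / (ξ ^ t + ξ ^ (-(t : ℤ)))) * |2 * (t : ℝ) ^ 2 / (1 - κ) - 1| := by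
  intro lam hlam
  have hL : 0 < L := hℓ.trans hℓL
  have hb : 0 ≤ (L + ℓ) / (L - ℓ) := div_nonneg (by linarith) (by linarith)
  have hξ0 : 0 < ξ := by
    have : √κ < 1 := (Real.sqrt_lt' one_pos).mpr (by rwa [one_pow, hκ, div_lt_one hL])
    rw [hξ]
    positivity
  have hTb : |(T ℝ t).eval (-(L + ℓ) / (L - ℓ))| = (ξ ^ t + ξ ^ (-(t : ℤ))) / 2 := by
    rw [neg_div, abs_eval_T_neg, add_div_sub_eq_half_add_inv hℓ.le hℓL (hκ ▸ hξ),
      eval_T_real_half_add_inv _ hξ0, zpow_natCast, abs_of_pos (by positivity)]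
  rw [hCt, eval_C_mul_comp_sub_mul_derivative, abs_mul, abs_inv, hTb, inv_div]
  refine mul_le_mul_of_nonneg_left ?_ (by positivity)
  calc _ ≤ (1 + (L + ℓ) / (L - ℓ)) * t ^ 2 - 1 := abs_eval_T_sub_add_mul_derivative_le ht
          (abs_two_div_sub_mul_sub_add_div_sub_le_one hℓL hlam) hb
    _ = 2 * t ^ 2 / (1 - κ) - 1 := by rw [one_add_add_div_sub hL.ne' hℓL.ne, hκ]; ring
    _ ≤ _ := le_abs_self _
end

section
/- Derivative bound for the shifted normalized Chebyshev polynomial (second polynomial core of Theorem 3.5): Let 0 < ℓ < L, κ = ℓ/L, ξ = (1-√κ)/(1+√κ), t ≥ 1 a natural number, and define Cₜ(λ) = Tₜ(m(λ))/Tₜ(m(0)) with m(λ) = (2λ - L - ℓ)/(L - ℓ). Then for every λ ∈ [ℓ, L], |Cₜ'(λ)| ≤ (2/(ξ^t + ξ^(-t))) · (2t²/(L - ℓ)). -/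
open Polynomial

lemma sin_nat_mul_le (n : ℕ) (θ : ℝ) : |Real.sin (n * θ)| ≤ n * |Real.sin θ| := by
  induction n with
  | zero => simp
  | succ n ih =>
    have : ((n+1:ℕ):ℝ) * θ = n * θ + θ := by push_cast; ring
    rw [this, Real.sin_add]
    calc |Real.sin (n*θ) * Real.cos θ + Real.cos (n*θ) * Real.sin θ|
        ≤ |Real.sin (n*θ) * Real.cos θ| + |Real.cos (n*θ) * Real.sin θ| := abs_add_le _ _
      _ ≤ |Real.sin (n*θ)| * 1 + 1 * |Real.sin θ| := by
          rw [abs_mul, abs_mul]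
          gcongr <;> [exact Real.abs_cos_le_one θ; exact Real.abs_cos_le_one _]
      _ ≤ n * |Real.sin θ| + 1 * |Real.sin θ| := by rw [mul_one]; gcongr
      _ = ((n+1:ℕ):ℝ) * |Real.sin θ| := by push_cast; ring

lemma abs_U_le (n : ℕ) (x : ℝ) (hx : x ∈ Set.Icc (-1:ℝ) 1) :
    |(Polynomial.Chebyshev.U ℝ (n:ℤ)).eval x| ≤ (n:ℝ) + 1 := by
  have hset : ∀ y ∈ Set.Ioo (-1:ℝ) 1, |(Polynomial.Chebyshev.U ℝ (n:ℤ)).eval y| ≤ (n:ℝ) + 1 := by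
    intro y hy
    set θ := Real.arccos y with hθ
    have hcos : Real.cos θ = y := Real.cos_arccos hy.1.le hy.2.le
    have hθpos : 0 < θ := Real.arccos_pos.2 hy.2
    have hθlt : θ < Real.pi := lt_of_le_of_ne (Real.arccos_le_pi y)
      (fun h => absurd (Real.arccos_eq_pi.1 h) (by linarith [hy.1]))
    have hsin : 0 < Real.sin θ := Real.sin_pos_of_pos_of_lt_pi hθpos hθlt
    have key : (Polynomial.Chebyshev.U ℝ (n:ℤ)).eval y * Real.sin θ
        = Real.sin (((n:ℤ) + 1) * θ) := by
      rw [← hcos]; exact Polynomial.Chebyshev.U_real_cos θ n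
    have h2 : |(Polynomial.Chebyshev.U ℝ (n:ℤ)).eval y| * Real.sin θ ≤ ((n:ℝ)+1) * Real.sin θ := by
      rw [← abs_of_pos hsin, ← abs_mul, key]
      have : ((n:ℤ) + 1 : ℝ) * θ = ((n+1 : ℕ) : ℝ) * θ := by push_cast; ring
      rw [this]
      calc |Real.sin (((n+1:ℕ):ℝ) * θ)| ≤ (n+1:ℕ) * |Real.sin θ| := sin_nat_mul_le _ _
        _ = ((n:ℝ)+1) * |Real.sin θ| := by push_cast; ring
    exact le_of_mul_le_mul_right h2 hsin
  have hcont : Continuous fun y => |(Polynomial.Chebyshev.U ℝ (n:ℤ)).eval y| :=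
    (Polynomial.continuous _).abs
  have hclosed : IsClosed {y : ℝ | |(Polynomial.Chebyshev.U ℝ (n:ℤ)).eval y| ≤ (n:ℝ) + 1} :=
    isClosed_le hcont continuous_const
  have : Set.Icc (-1:ℝ) 1 ⊆ {y : ℝ | |(Polynomial.Chebyshev.U ℝ (n:ℤ)).eval y| ≤ (n:ℝ) + 1} := by
    rw [← closure_Ioo (by norm_num : (-1:ℝ) ≠ 1)]
    exact hclosed.closure_subset_iff.2 hset
  exact this hx

lemma T_eval_half_add_inv (a : ℝ) (ha : a ≠ 0) (n : ℤ) :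
    (Polynomial.Chebyshev.T ℝ n).eval ((a + a⁻¹)/2) = (a ^ n + a ^ (-n)) / 2 := by
  induction n using Polynomial.Chebyshev.induct with
  | zero => simp
  | one => simp [zpow_one]
  | add_two n ih1 ih2 =>
    rw [Polynomial.Chebyshev.T_add_two]
    simp only [eval_sub, eval_mul, eval_X, eval_ofNat, ih1, ih2]
    have hn : a ^ (n:ℤ) ≠ 0 := zpow_ne_zero _ ha
    simp only [neg_add, zpow_add₀ ha, zpow_neg, zpow_one, zpow_two] at *
    field_simp
    ring
  | neg_add_one n ih1 ih2 =>
    rw [show -(n:ℤ) - 1 = -(n:ℤ) - 1 from rfl, Polynomial.Chebyshev.T_sub_one ℝ (-(n:ℤ))]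
    simp only [eval_sub, eval_mul, eval_X, eval_ofNat, ih1, ih2]
    have hn : a ^ (n:ℤ) ≠ 0 := zpow_ne_zero _ ha
    simp only [sub_eq_add_neg, neg_add, neg_neg, zpow_add₀ ha, zpow_neg, zpow_one, zpow_two] at *
    field_simp
    ring


/-- Derivative bound for the shifted normalized Chebyshev polynomial (second polynomial
core of Theorem 3.5): on `[ℓ, L]` one has `|Cₜ'(λ)| ≤ (2/(ξ^t + ξ^(-t))) · (2t²/(L-ℓ))`. -/
theorem chebyshev_derivative_bound (ℓ L κ ξ : ℝ) (hℓ : 0 < ℓ) (hℓL : ℓ < L)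
    (hκ : κ = ℓ / L) (hξ : ξ = (1 - Real.sqrt κ) / (1 + Real.sqrt κ))
    (t : ℕ) (ht : 1 ≤ t)
    (Ct : Polynomial ℝ)
    (hCt : Ct = Polynomial.C (((Polynomial.Chebyshev.T ℝ (t : ℤ)).eval (-(L + ℓ) / (L - ℓ)))⁻¹) *
        (Polynomial.Chebyshev.T ℝ (t : ℤ)).comp
          (Polynomial.C (2 / (L - ℓ)) * Polynomial.X - Polynomial.C ((L + ℓ) / (L - ℓ)))) :
    ∀ lam ∈ Set.Icc ℓ L,
      |Ct.derivative.eval lam| ≤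
        (2 / (ξ ^ t + ξ ^ (-(t : ℤ)))) * (2 * (t : ℝ) ^ 2 / (L - ℓ)) := by
  intro lam hlam
  have hL : 0 < L := hℓ.trans hℓL
  have hLℓ : 0 < L - ℓ := by linarith
  set s : ℝ := Real.sqrt κ with hs
  have hκpos : 0 < κ := by rw [hκ]; positivity
  have hκlt : κ < 1 := by rw [hκ]; exact (div_lt_one hL).2 hℓL
  have hs0 : 0 < s := Real.sqrt_pos.2 hκpos
  have hs1 : s < 1 := by
    rw [hs, show (1:ℝ) = Real.sqrt 1 by simp]
    exact Real.sqrt_lt_sqrt hκpos.le hκlt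
  have hs2 : s ^ 2 = ℓ / L := by rw [hs, Real.sq_sqrt hκpos.le, hκ]
  have hξ0 : 0 < ξ := by rw [hξ]; exact div_pos (by linarith) (by linarith)
  have hξne : ξ ≠ 0 := hξ0.ne'
  -- key: (ξ + ξ⁻¹)/2 = (L+ℓ)/(L-ℓ)
  have hkey : (ξ + ξ⁻¹) / 2 = (L + ℓ) / (L - ℓ) := by
    have h1s : (1:ℝ) + s ≠ 0 := by positivity
    have h1s' : (1:ℝ) - s ≠ 0 := by
      intro h; rw [sub_eq_zero] at h; linarith
    rw [hξ]
    have hsL : s ^ 2 * L = ℓ := by rw [hs2]; field_simp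
    field_simp
    ring_nf
    nlinarith [hsL]
  -- value of T at -(L+ℓ)/(L-ℓ)
  have hb : (-ξ⁻¹ + (-ξ⁻¹)⁻¹) / 2 = -(L + ℓ) / (L - ℓ) := by
    rw [neg_div, ← hkey]; field_simp; ring
  have hbne : (-ξ⁻¹ : ℝ) ≠ 0 := by simp [hξne]
  have hT := T_eval_half_add_inv (-ξ⁻¹) hbne (t : ℤ)
  rw [hb] at hT
  have h1 : (-ξ⁻¹ : ℝ) ^ (t:ℤ) = (-1) ^ (t:ℤ) * ξ ^ (-(t:ℤ)) := by
    rw [show (-ξ⁻¹ : ℝ) = (-1) * ξ⁻¹ by ring, mul_zpow, inv_zpow, ← zpow_neg]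
  have hinv : ((-1:ℝ) ^ (t:ℤ))⁻¹ = (-1:ℝ) ^ (t:ℤ) := by
    rcases Int.even_or_odd (t:ℤ) with h | h
    · rw [h.neg_one_zpow]; norm_num
    · rw [h.neg_one_zpow]; norm_num
  have h2 : (-ξ⁻¹ : ℝ) ^ (-(t:ℤ)) = (-1) ^ (t:ℤ) * ξ ^ (t:ℤ) := by
    rw [show (-ξ⁻¹ : ℝ) = (-1) * ξ⁻¹ by ring, mul_zpow, inv_zpow, zpow_neg, zpow_neg,
      inv_inv, hinv]
  have hTval : (Polynomial.Chebyshev.T ℝ (t : ℤ)).eval (-(L + ℓ) / (L - ℓ))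
      = (-1) ^ (t:ℤ) * ((ξ ^ t + ξ ^ (-(t:ℤ))) / 2) := by
    rw [hT, h1, h2, ← zpow_natCast ξ t]; ring
  have hS : 0 < ξ ^ t + ξ ^ (-(t:ℤ)) := by positivity
  have habsT : |(Polynomial.Chebyshev.T ℝ (t : ℤ)).eval (-(L + ℓ) / (L - ℓ))|
      = (ξ ^ t + ξ ^ (-(t:ℤ))) / 2 := by
    rw [hTval, abs_mul, zpow_natCast, abs_pow, abs_neg, abs_one, one_pow, one_mul,
      abs_of_pos (by positivity)]
  -- derivative computation
  set x : ℝ := 2 / (L - ℓ) * lam - (L + ℓ) / (L - ℓ) with hx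
  have hxIcc : x ∈ Set.Icc (-1:ℝ) 1 := by
    constructor
    · rw [hx, show 2 / (L - ℓ) * lam - (L + ℓ) / (L - ℓ) = (2 * lam - (L + ℓ)) / (L - ℓ) by ring,
        le_div_iff₀ hLℓ]
      nlinarith [hlam.1]
    · rw [hx, show 2 / (L - ℓ) * lam - (L + ℓ) / (L - ℓ) = (2 * lam - (L + ℓ)) / (L - ℓ) by ring,
        div_le_iff₀ hLℓ]
      nlinarith [hlam.2]
  have hderiv : Ct.derivative.eval lam
      = ((Polynomial.Chebyshev.T ℝ (t:ℤ)).eval (-(L + ℓ) / (L - ℓ)))⁻¹ *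
        ((t:ℝ) * (Polynomial.Chebyshev.U ℝ ((t:ℤ) - 1)).eval x * (2 / (L - ℓ))) := by
    rw [hCt, derivative_C_mul, derivative_comp, Polynomial.Chebyshev.T_derivative_eq_U]
    simp [hx]
    constructor
    · ring
  have ht1 : ((t:ℤ) - 1) = ((t - 1 : ℕ) : ℤ) := by omega
  have hU : |(Polynomial.Chebyshev.U ℝ ((t:ℤ) - 1)).eval x| ≤ (t : ℝ) := by
    have := abs_U_le (t - 1) x hxIcc
    rw [← ht1] at this
    have h' : ((t - 1 : ℕ) : ℝ) + 1 = (t : ℝ) := by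
      have : (1:ℕ) ≤ t := ht
      push_cast [Nat.cast_sub this]
      ring
    linarith [this, h'.le]
  rw [hderiv]
  have htpos : (0:ℝ) < t := by exact_mod_cast ht
  calc |((Polynomial.Chebyshev.T ℝ (t:ℤ)).eval (-(L + ℓ) / (L - ℓ)))⁻¹ *
        ((t:ℝ) * (Polynomial.Chebyshev.U ℝ ((t:ℤ) - 1)).eval x * (2 / (L - ℓ)))|
      = ((ξ ^ t + ξ ^ (-(t:ℤ))) / 2)⁻¹ *
        ((t:ℝ) * |(Polynomial.Chebyshev.U ℝ ((t:ℤ) - 1)).eval x| * (2 / (L - ℓ))) := by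
        rw [abs_mul, abs_inv, habsT, abs_mul, abs_mul, abs_of_pos htpos,
          abs_of_pos (by positivity : (0:ℝ) < 2 / (L - ℓ))]
    _ ≤ ((ξ ^ t + ξ ^ (-(t:ℤ))) / 2)⁻¹ * ((t:ℝ) * (t:ℝ) * (2 / (L - ℓ))) := by
        gcongr
    _ = (2 / (ξ ^ t + ξ ^ (-(t : ℤ)))) * (2 * (t : ℝ) ^ 2 / (L - ℓ)) := by
        field_simp
end
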